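/- Static vortex solutions solve the field equations: if a₀ = 0, all fields are time-independent, and (φ, a) satisfy D_{w̄}φ = 0 and (i/2) f_{w w̄} + (Ω/4)(-C₀ + C φ conj(φ)) = 0, then the second order equation D_w D_{w̄} conj(φ) + D_{w̄} D_w conj(φ) + (Ω/2)(-C₀ + C φ conj(φ)) conj(φ) = 0 holds. -/

import Mathlib

open Complex

/-- Wirtinger derivative ∂/∂w. -/
noncomputable def dw (f : ℂ → ℂ) (z : ℂ) : ℂ :=
  (1/2 : ℂ) * (fderiv ℝ f z 1 - Complex.I * fderiv ℝ f z Complex.I)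

/-- Wirtinger derivative ∂/∂w̄. -/
noncomputable def dwbar (f : ℂ → ℂ) (z : ℂ) : ℂ :=
  (1/2 : ℂ) * (fderiv ℝ f z 1 + Complex.I * fderiv ℝ f z Complex.I)

lemma dwbar_congr {f g : ℂ → ℂ} {z : ℂ} (h : f =ᶠ[nhds z] g) : dwbar f z = dwbar g z := by
  simp only [dwbar, h.fderiv_eq]

lemma fderiv_conj_comp {f : ℂ → ℂ} {z : ℂ} (hf : DifferentiableAt ℝ f z) (v : ℂ) :
    fderiv ℝ (fun x => (starRingEnd ℂ) (f x)) z v = (starRingEnd ℂ) (fderiv ℝ f z v) := by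
  have h := (Complex.conjCLE.toContinuousLinearMap.hasFDerivAt.comp z hf.hasFDerivAt).fderiv
  have heq : (fun x => (starRingEnd ℂ) (f x)) =
      (Complex.conjCLE.toContinuousLinearMap : ℂ → ℂ) ∘ f := rfl
  rw [heq, h]
  rfl

lemma dw_conj {f : ℂ → ℂ} {z : ℂ} (hf : DifferentiableAt ℝ f z) :
    dw (fun x => (starRingEnd ℂ) (f x)) z = (starRingEnd ℂ) (dwbar f z) := by
  simp only [dw, dwbar, fderiv_conj_comp hf, map_mul, map_add, map_sub, map_div₀,
    map_one, map_ofNat, Complex.conj_I]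
  ring

lemma fderiv_mul_apply {f g : ℂ → ℂ} {z : ℂ} (hf : DifferentiableAt ℝ f z)
    (hg : DifferentiableAt ℝ g z) (v : ℂ) :
    fderiv ℝ (fun x => f x * g x) z v = f z * fderiv ℝ g z v + g z * fderiv ℝ f z v := by
  rw [fderiv_fun_mul hf hg]
  simp [smul_eq_mul]

lemma dw_mul {f g : ℂ → ℂ} {z : ℂ} (hf : DifferentiableAt ℝ f z)
    (hg : DifferentiableAt ℝ g z) :
    dw (fun x => f x * g x) z = dw f z * g z + f z * dw g z := by
  simp only [dw, fderiv_mul_apply hf hg]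
  ring

lemma dwbar_mul {f g : ℂ → ℂ} {z : ℂ} (hf : DifferentiableAt ℝ f z)
    (hg : DifferentiableAt ℝ g z) :
    dwbar (fun x => f x * g x) z = dwbar f z * g z + f z * dwbar g z := by
  simp only [dwbar, fderiv_mul_apply hf hg]
  ring

lemma dw_add {f g : ℂ → ℂ} {z : ℂ} (hf : DifferentiableAt ℝ f z)
    (hg : DifferentiableAt ℝ g z) :
    dw (fun x => f x + g x) z = dw f z + dw g z := by
  simp only [dw, fderiv_fun_add hf hg]
  simp
  ring

lemma fderiv_fderiv_apply {f : ℂ → ℂ} {z : ℂ} (hf : DifferentiableAt ℝ (fderiv ℝ f) z)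
    (u v : ℂ) :
    fderiv ℝ (fun x => fderiv ℝ f x v) z u = fderiv ℝ (fderiv ℝ f) z u v := by
  have h := ((ContinuousLinearMap.apply ℝ ℂ v).hasFDerivAt.comp z hf.hasFDerivAt).fderiv
  have heq : (fun x => fderiv ℝ f x v) =
      (ContinuousLinearMap.apply ℝ ℂ v : (ℂ →L[ℝ] ℂ) → ℂ) ∘ (fderiv ℝ f) := rfl
  rw [heq, h]
  rfl

lemma differentiableAt_fderiv_apply {f : ℂ → ℂ} {z : ℂ}
    (hf : DifferentiableAt ℝ (fderiv ℝ f) z) (v : ℂ) :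
    DifferentiableAt ℝ (fun x => fderiv ℝ f x v) z :=
  ((ContinuousLinearMap.apply ℝ ℂ v).differentiable.differentiableAt).comp z hf

lemma differentiableAt_dwbar {f : ℂ → ℂ} {z : ℂ} (hf : DifferentiableAt ℝ (fderiv ℝ f) z) :
    DifferentiableAt ℝ (dwbar f) z := by
  unfold dwbar
  exact (differentiableAt_const _).mul
    ((differentiableAt_fderiv_apply hf 1).add
      ((differentiableAt_const _).mul (differentiableAt_fderiv_apply hf Complex.I)))

lemma fderiv_dwbar {f : ℂ → ℂ} {z : ℂ} (hf : DifferentiableAt ℝ (fderiv ℝ f) z) (u : ℂ) :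
    fderiv ℝ (dwbar f) z u =
      (1/2 : ℂ) * (fderiv ℝ (fderiv ℝ f) z u 1 +
        Complex.I * fderiv ℝ (fderiv ℝ f) z u Complex.I) := by
  have h1 := differentiableAt_fderiv_apply hf 1
  have hI := differentiableAt_fderiv_apply hf Complex.I
  have : dwbar f = fun x => (1/2 : ℂ) * ((fun x => fderiv ℝ f x 1) x +
      Complex.I * (fun x => fderiv ℝ f x Complex.I) x) := rfl
  rw [this, fderiv_const_mul (h1.fun_add ((differentiableAt_const _).fun_mul hI)) _,
    fderiv_fun_add h1 ((differentiableAt_const _).fun_mul hI), fderiv_const_mul hI]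
  simp only [ContinuousLinearMap.smul_apply, ContinuousLinearMap.add_apply, smul_eq_mul,
    fderiv_fderiv_apply hf]

lemma fderiv_dw {f : ℂ → ℂ} {z : ℂ} (hf : DifferentiableAt ℝ (fderiv ℝ f) z) (u : ℂ) :
    fderiv ℝ (dw f) z u =
      (1/2 : ℂ) * (fderiv ℝ (fderiv ℝ f) z u 1 -
        Complex.I * fderiv ℝ (fderiv ℝ f) z u Complex.I) := by
  have h1 := differentiableAt_fderiv_apply hf 1
  have hI := differentiableAt_fderiv_apply hf Complex.I
  have : dw f = fun x => (1/2 : ℂ) * ((fun x => fderiv ℝ f x 1) x -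
      Complex.I * (fun x => fderiv ℝ f x Complex.I) x) := rfl
  rw [this, fderiv_const_mul (h1.fun_sub ((differentiableAt_const _).fun_mul hI)) _,
    fderiv_fun_sub h1 ((differentiableAt_const _).fun_mul hI), fderiv_const_mul hI]
  simp only [ContinuousLinearMap.smul_apply, ContinuousLinearMap.sub_apply, smul_eq_mul,
    fderiv_fderiv_apply hf]

/-- Schwarz: the mixed Wirtinger derivatives commute for C^∞ functions. -/
lemma dw_dwbar_comm {f : ℂ → ℂ} {z : ℂ} (hf : ContDiffAt ℝ (⊤ : ℕ∞) f z) :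
    dw (dwbar f) z = dwbar (dw f) z := by
  have hfd : DifferentiableAt ℝ (fderiv ℝ f) z :=
    (hf.fderiv_right (m := 1) (by norm_num; exact WithTop.coe_le_coe.mpr le_top)).differentiableAt (by norm_num)
  have hsymm : IsSymmSndFDerivAt ℝ f z := hf.isSymmSndFDerivAt (by norm_num; exact WithTop.coe_le_coe.mpr le_top)
  simp only [dw, dwbar, fderiv_dwbar hfd, fderiv_dw hfd]
  rw [hsymm 1 Complex.I]
  ring

/-- Static vortices solve the second order field equation: if `D_{w̄}φ = 0` and
`(i/2) f_{w w̄} + (Ω/4)(-C₀ + C φ φ̄) = 0`, then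
`D_w D_{w̄} φ̄ + D_{w̄} D_w φ̄ + (Ω/2)(-C₀ + C φ φ̄) φ̄ = 0`,
where on `φ̄` the covariant derivatives carry the opposite charge. -/
theorem stmt18 (C C₀ : ℝ) (U : Set ℂ) (hU : IsOpen U)
    (φ aw awbar : ℂ → ℂ) (Ω : ℂ → ℝ)
    (hφ : ContDiffOn ℝ (⊤ : ℕ∞) φ U) (haw : ContDiffOn ℝ (⊤ : ℕ∞) aw U)
    (hΩ : ContDiffOn ℝ (⊤ : ℕ∞) (fun z => (Ω z : ℂ)) U)
    (hΩpos : ∀ z ∈ U, 0 < Ω z)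
    (hreal : ∀ z ∈ U, awbar z = (starRingEnd ℂ) (aw z))
    (hhol : ∀ z ∈ U, dwbar φ z - Complex.I * awbar z * φ z = 0)
    (hmag : ∀ z ∈ U, (Complex.I / 2) * (dw awbar z - dwbar aw z) +
      ((Ω z : ℂ) / 4) * (-(C₀ : ℂ) + (C : ℂ) * φ z * (starRingEnd ℂ) (φ z)) = 0) :
    let ψ : ℂ → ℂ := fun x => (starRingEnd ℂ) (φ x)
    let Dwψ : ℂ → ℂ := fun x => dw ψ x + Complex.I * aw x * ψ x
    let Dwbarψ : ℂ → ℂ := fun x => dwbar ψ x + Complex.I * awbar x * ψ x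
    ∀ z ∈ U,
      (dw Dwbarψ z + Complex.I * aw z * Dwbarψ z) +
      (dwbar Dwψ z + Complex.I * awbar z * Dwψ z) +
      ((Ω z : ℂ) / 2) * (-(C₀ : ℂ) + (C : ℂ) * φ z * ψ z) * ψ z = 0 := by
  intro ψ Dwψ Dwbarψ z hz
  have hψsmooth : ContDiffOn ℝ (⊤ : ℕ∞) ψ U :=
    fun x hx => (Complex.conjCLE.contDiff.contDiffAt.comp_contDiffWithinAt x (hφ x hx))
  -- ψ smoothness at each point
  have hψat : ∀ x ∈ U, ContDiffAt ℝ (⊤ : ℕ∞) ψ x := fun x hx => hψsmooth.contDiffAt (hU.mem_nhds hx)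
  have hφat : ∀ x ∈ U, ContDiffAt ℝ (⊤ : ℕ∞) φ x := fun x hx => hφ.contDiffAt (hU.mem_nhds hx)
  have hawat : ∀ x ∈ U, ContDiffAt ℝ (⊤ : ℕ∞) aw x := fun x hx => haw.contDiffAt (hU.mem_nhds hx)
  have hawbarat : ∀ x ∈ U, ContDiffAt ℝ (⊤ : ℕ∞) awbar x := by
    intro x hx
    have : ContDiffAt ℝ (⊤ : ℕ∞) (fun y => (starRingEnd ℂ) (aw y)) x :=
      Complex.conjCLE.contDiff.contDiffAt.comp x (hawat x hx)
    exact this.congr_of_eventuallyEq <| by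
      filter_upwards [hU.mem_nhds hx] with y hy using hreal y hy
  -- D_w ψ vanishes on U
  have hDwψ0 : ∀ x ∈ U, Dwψ x = 0 := by
    intro x hx
    have hdwψ : dw ψ x = (starRingEnd ℂ) (dwbar φ x) :=
      dw_conj ((hφat x hx).differentiableAt (by norm_num))
    have hh := hhol x hx
    have hdφ : dwbar φ x = Complex.I * awbar x * φ x := by linear_combination hh
    show dw ψ x + Complex.I * aw x * ψ x = 0
    rw [hdwψ, hdφ]
    simp only [map_mul, Complex.conj_I, hreal x hx, RingHomCompTriple.comp_apply,
      RingHom.id_apply]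
    show -Complex.I * aw x * ψ x + Complex.I * aw x * ψ x = 0
    ring
  have hUnhds : U ∈ nhds z := hU.mem_nhds hz
  -- second covariant term vanishes
  have hterm2 : dwbar Dwψ z = 0 := by
    have : Dwψ =ᶠ[nhds z] (fun _ => (0 : ℂ)) := by
      filter_upwards [hUnhds] with y hy using hDwψ0 y hy
    rw [dwbar_congr this]
    simp [dwbar]
  -- differentiability facts at z
  have hψfd : DifferentiableAt ℝ (fderiv ℝ ψ) z :=
    ((hψat z hz).fderiv_right (m := 1) (by norm_num; exact WithTop.coe_le_coe.mpr le_top)).differentiableAt (by norm_num)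
  have hψd : DifferentiableAt ℝ ψ z := (hψat z hz).differentiableAt (by norm_num)
  have hawd : DifferentiableAt ℝ aw z := (hawat z hz).differentiableAt (by norm_num)
  have hawbard : DifferentiableAt ℝ awbar z := (hawbarat z hz).differentiableAt (by norm_num)
  -- expand dw Dwbarψ
  have hdwDwbar : dw Dwbarψ z = dw (dwbar ψ) z +
      (Complex.I * dw awbar z * ψ z + Complex.I * awbar z * dw ψ z) := by
    have hd2 : DifferentiableAt ℝ (fun x => Complex.I * awbar x * ψ x) z := by
      exact (((differentiableAt_const _).mul hawbard).mul hψd)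
    have h1 : dw Dwbarψ z = dw (dwbar ψ) z + dw (fun x => Complex.I * awbar x * ψ x) z :=
      dw_add (differentiableAt_dwbar hψfd) hd2
    have h2 : dw (fun x => Complex.I * awbar x * ψ x) z =
        dw (fun x => Complex.I * awbar x) z * ψ z + (Complex.I * awbar z) * dw ψ z :=
      dw_mul ((differentiableAt_const _).mul hawbard) hψd
    have h3 : dw (fun x => Complex.I * awbar x) z = Complex.I * dw awbar z := by
      have : dw (fun x => Complex.I * awbar x) z =
          dw (fun _ => Complex.I) z * awbar z + Complex.I * dw awbar z :=
        dw_mul (differentiableAt_const _) hawbard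
      rw [this]
      simp [dw]
    rw [h1, h2, h3]
  -- Schwarz + first order equation for dwbar (dw ψ)
  have hschwarz : dw (dwbar ψ) z = dwbar (dw ψ) z := dw_dwbar_comm (hψat z hz)
  have hdwψ_eq : dw ψ =ᶠ[nhds z] (fun x => -(Complex.I * aw x * ψ x)) := by
    filter_upwards [hUnhds] with y hy
    have := hDwψ0 y hy
    simp only [Dwψ] at this
    linear_combination this
  have hdbardw : dwbar (dw ψ) z = -(Complex.I * dwbar aw z * ψ z + Complex.I * aw z * dwbar ψ z) := by
    rw [dwbar_congr hdwψ_eq]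
    have hneg : (fun x => -(Complex.I * aw x * ψ x)) =
        (fun x => (-Complex.I * aw x) * ψ x) := by funext x; ring
    rw [hneg, dwbar_mul ((differentiableAt_const _).fun_mul hawd) hψd]
    have h3 : dwbar (fun x => -Complex.I * aw x) z = -Complex.I * dwbar aw z := by
      have : dwbar (fun x => -Complex.I * aw x) z =
          dwbar (fun _ => -Complex.I) z * aw z + (-Complex.I) * dwbar aw z :=
        dwbar_mul (differentiableAt_const _) hawd
      rw [this]
      simp [dwbar]
    rw [h3]
    ring
  -- value facts at z
  have hdwψz : dw ψ z = -(Complex.I * aw z * ψ z) := by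
    have := hDwψ0 z hz
    simp only [Dwψ] at this
    linear_combination this
  have hDwψz : Dwψ z = 0 := hDwψ0 z hz
  have hm := hmag z hz
  -- assemble
  show (dw Dwbarψ z + Complex.I * aw z * Dwbarψ z) +
      (dwbar Dwψ z + Complex.I * awbar z * Dwψ z) +
      ((Ω z : ℂ) / 2) * (-(C₀ : ℂ) + (C : ℂ) * φ z * ψ z) * ψ z = 0
  rw [hterm2, hDwψz, hdwDwbar, hschwarz, hdbardw]
  show -(Complex.I * dwbar aw z * ψ z + Complex.I * aw z * dwbar ψ z) +
      (Complex.I * dw awbar z * ψ z + Complex.I * awbar z * dw ψ z) +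
      Complex.I * aw z * (dwbar ψ z + Complex.I * awbar z * ψ z) +
      (0 + Complex.I * awbar z * 0) +
      ((Ω z : ℂ) / 2) * (-(C₀ : ℂ) + (C : ℂ) * φ z * ψ z) * ψ z = 0
  rw [hdwψz]
  have hψz : ψ z = (starRingEnd ℂ) (φ z) := rfl
  rw [hψz]
  linear_combination (2 * (starRingEnd ℂ) (φ z)) * hm
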